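/- Let R be a commutative ring, I a finite set, and x : I → R. For k ≥ 0 let e_k denote the k-th elementary symmetric function of the family (x_i)_{i∈I}, and for i ∈ I let e_2^{(i)} denote the 2nd elementary symmetric function of the family (x_j)_{j∈I, j≠i}. Then: e_1 · e_3 = 4 · e_4 + Σ_{i∈I} x_i² · e_2^{(i)}. In particular, if all x_i ≥ 0 in an ordered ring, then e_1 e_3 − e_4 = 3 e_4 + Σ_i x_i² e_2^{(i)} ≥ 0. -/

import Mathlib

open Finset

/-- The `k`-th elementary symmetric function of the family `(x j)_{j ∈ s}` in a commutative
ring. -/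
def esym {ι : Type} {R : Type} [CommRing R] (s : Finset ι) (k : ℕ) (x : ι → R) : R :=
  ∑ t ∈ Finset.powersetCard k s, ∏ j ∈ t, x j

lemma esym_zero {ι R : Type} [CommRing R] (s : Finset ι) (x : ι → R) : esym s 0 x = 1 := by
  simp [esym]

lemma esym_insert {ι R : Type} [CommRing R] [DecidableEq ι] {a : ι} {s : Finset ι}
    (h : a ∉ s) (k : ℕ) (x : ι → R) :
    esym (insert a s) (k + 1) x = esym s (k + 1) x + x a * esym s k x := by
  unfold esym
  rw [Finset.powersetCard_succ_insert h, Finset.sum_union, Finset.sum_image, Finset.mul_sum]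
  · congr 1
    refine Finset.sum_congr rfl fun t ht => ?_
    rw [Finset.mem_powersetCard] at ht
    rw [Finset.prod_insert (fun hat => h (ht.1 hat))]
  · intro t ht u hu htu
    rw [Finset.mem_coe, Finset.mem_powersetCard] at ht hu
    have hat : a ∉ t := fun hat => h (ht.1 hat)
    have hau : a ∉ u := fun hau => h (hu.1 hau)
    rw [← Finset.erase_insert hat, ← Finset.erase_insert hau, htu]
  · rw [Finset.disjoint_left]
    intro t ht htim
    rw [Finset.mem_powersetCard] at ht
    rcases Finset.mem_image.mp htim with ⟨u, _, rfl⟩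
    exact h (ht.1 (Finset.mem_insert_self a u))

lemma esym_nonneg {ι S : Type} [CommRing S] [LinearOrder S] [IsStrictOrderedRing S] (s : Finset ι) (k : ℕ) (y : ι → S)
    (hy : ∀ i, 0 ≤ y i) : 0 ≤ esym s k y :=
  Finset.sum_nonneg fun t _ => Finset.prod_nonneg fun j _ => hy j

lemma key {ι R : Type} [CommRing R] [DecidableEq ι] (x : ι → R) (s : Finset ι) : ∀ k : ℕ,
    esym s 1 x * esym s (k + 1) x
      = (k + 2) * esym s (k + 2) x + ∑ i ∈ s, x i ^ 2 * esym (s.erase i) k x := by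
  induction s using Finset.induction_on with
  | empty =>
    intro k
    have h1 : ∀ n : ℕ, Finset.powersetCard (n + 1) (∅ : Finset ι) = ∅ := by
      intro n
      ext t
      simp only [Finset.mem_powersetCard, Finset.notMem_empty, iff_false, not_and]
      intro ht
      simp [Finset.subset_empty.mp ht]
    simp [esym, h1]
  | insert a s h ih =>
    intro k
    have e1 : esym (insert a s) 1 x = esym s 1 x + x a * esym s 0 x := esym_insert h 0 x
    rw [esym_zero] at e1
    have hsum : ∀ m : ℕ, ∑ i ∈ insert a s, x i ^ 2 * esym ((insert a s).erase i) m x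
        = x a ^ 2 * esym s m x
          + ∑ i ∈ s, x i ^ 2 * esym (insert a (s.erase i)) m x := by
      intro m
      rw [Finset.sum_insert h, Finset.erase_insert h]
      congr 1
      refine Finset.sum_congr rfl fun i hi => ?_
      rw [Finset.erase_insert_of_ne (Ne.symm (ne_of_mem_of_not_mem hi h))]
    match k with
    | 0 =>
      have e2 : esym (insert a s) 2 x = esym s 2 x + x a * esym s 1 x := esym_insert h 1 x
      rw [e1, e2, hsum 0, esym_zero]
      have : ∀ i ∈ s, x i ^ 2 * esym (insert a (s.erase i)) 0 x
          = x i ^ 2 * esym (s.erase i) 0 x := by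
        intro i hi; rw [esym_zero, esym_zero]
      rw [Finset.sum_congr rfl this]
      have h0 := ih 0
      push_cast at h0 ⊢
      linear_combination h0
    | m + 1 =>
      have e3 : esym (insert a s) (m + 2) x = esym s (m + 2) x + x a * esym s (m + 1) x :=
        esym_insert h (m + 1) x
      have e4 : esym (insert a s) (m + 3) x = esym s (m + 3) x + x a * esym s (m + 2) x :=
        esym_insert h (m + 2) x
      rw [e1, e3, e4, hsum (m + 1)]
      have : ∀ i ∈ s, x i ^ 2 * esym (insert a (s.erase i)) (m + 1) x
          = x i ^ 2 * (esym (s.erase i) (m + 1) x + x a * esym (s.erase i) m x) := by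
        intro i hi
        rw [esym_insert (fun ha => h (Finset.mem_of_mem_erase ha)) m x]
      rw [Finset.sum_congr rfl this]
      have h1 := ih (m + 1)
      have h2 := ih m
      have hsplit : ∑ i ∈ s, x i ^ 2 * (esym (s.erase i) (m + 1) x + x a * esym (s.erase i) m x)
          = (∑ i ∈ s, x i ^ 2 * esym (s.erase i) (m + 1) x)
            + x a * ∑ i ∈ s, x i ^ 2 * esym (s.erase i) m x := by
        rw [Finset.mul_sum, ← Finset.sum_add_distrib]
        exact Finset.sum_congr rfl fun i _ => by ring
      rw [hsplit]
      push_cast at h1 h2 ⊢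
      linear_combination h1 + x a * h2

/-- elementary symmetric function identity used in Section 6.3:
`e₁ e₃ = 4 e₄ + Σ_i x_i² e₂^{(i)}` in any commutative ring, where `e₂^{(i)}` is the second
elementary symmetric function of the family with `x_i` removed; in particular, for a family
`y` of nonnegative elements of a linearly ordered commutative ring,
`e₁e₃ - e₄ = 3e₄ + Σ_i y_i² e₂^{(i)} ≥ 0`. -/
theorem stmt17 (R : Type) [CommRing R] (I : Type) [Fintype I] [DecidableEq I] (x : I → R)
    (S : Type) [CommRing S] [LinearOrder S] [IsStrictOrderedRing S] (y : I → S) (hy : ∀ i, 0 ≤ y i) :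
    esym Finset.univ 1 x * esym Finset.univ 3 x
      = 4 * esym Finset.univ 4 x + ∑ i, x i ^ 2 * esym (Finset.univ.erase i) 2 x ∧
    esym Finset.univ 1 y * esym Finset.univ 3 y - esym Finset.univ 4 y
      = 3 * esym Finset.univ 4 y + ∑ i, y i ^ 2 * esym (Finset.univ.erase i) 2 y ∧
    0 ≤ esym Finset.univ 1 y * esym Finset.univ 3 y - esym Finset.univ 4 y := by
  have hx := key x Finset.univ 2
  have hy' := key y Finset.univ 2
  norm_num at hx hy'
  refine ⟨hx, by linarith [hy'], ?_⟩
  have h4 : (0:S) ≤ esym Finset.univ 4 y := esym_nonneg _ _ _ hy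
  have hterm : 0 ≤ ∑ i, y i ^ 2 * esym (Finset.univ.erase i) 2 y :=
    Finset.sum_nonneg fun i _ => mul_nonneg (sq_nonneg _) (esym_nonneg _ _ _ hy)
  linarith [hy']
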